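/- arXiv:2502.00494 — 2 statements merged into one kernel-verified Lean document; each statement's English description precedes it below -/
import Mathlib

section
/- Let N be a finite nonempty set with n = |N| ≥ 1, and fix i ∈ N. For a function a : 2^N → ℝ and a client i' ∈ N define A_{i'}(a) = Σ_{C ⊆ N∖{i'}} w_n(|C|)·(a(C ∪ {i'}) − a(C)), where w_n(k) = k!·(n−k−1)!/n!. If functions a, â : 2^N → ℝ satisfy â(N) = a(N), â(C) = a(C) for every C ⊆ N with i ∉ C, and a(C) ≥ â(C) for every C ⊊ N with i ∈ C, then A_i(â) ≤ A_i(a) and Σ_{i'∈N, i'≠i} A_{i'}(â) ≥ Σ_{i'∈N, i'≠i} A_{i'}(a). -/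
/-!
Client `i`'s report only changes the utilities of coalitions containing `i` (other than `N`),
and these enter `A_i` with nonnegative weight and a plus sign, so `A_i` is monotone in them.
For the other clients, efficiency `∑ i', A_{i'}(a) = a(N) - a(∅)` shows that their total value
is `a(N) - a(∅) - A_i(a)`; since `a(N)` and `a(∅)` are unaffected by the report, the others gain
exactly what `i` loses.
-/

open Finset

/-- Shapley weight `w_n(k) = k! (n-k-1)! / n!`. -/
noncomputable def w (m k : ℕ) : ℝ :=
  (Nat.factorial k : ℝ) * (Nat.factorial (m - k - 1) : ℝ) / (Nat.factorial m : ℝ)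

/-- The client-level (Truth-)Shapley value `A_{i'}(a)` computed from the
coalition utilities `a : 2^N → ℝ`. -/
noncomputable def clientShapley {ι : Type*} [Fintype ι] [DecidableEq ι]
    (a : Finset ι → ℝ) (i : ι) : ℝ :=
  ∑ C ∈ (Finset.univ.erase i).powerset,
    w (Fintype.card ι) C.card * (a (insert i C) - a C)

section DoubleCounting

variable {ι M : Type*} [Fintype ι] [DecidableEq ι] [AddCommMonoid M]

lemma sum_sum_powerset_erase (f : Finset ι → M) :
    ∑ i, ∑ C ∈ (univ.erase i).powerset, f C = ∑ S, #Sᶜ • f S := by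
  rw [sum_comm' (t' := univ) (s' := fun S => Sᶜ) (by simp [subset_erase])]
  simp

lemma sum_powerset_erase_insert (i : ι) (f : Finset ι → M) :
    ∑ C ∈ (univ.erase i).powerset, f (insert i C) = ∑ S with i ∈ S, f S := by
  refine sum_nbij' (insert i) (erase · i) ?_ ?_ ?_ ?_ fun _ _ => rfl <;>
    intro S hS <;> simp_all [subset_erase]

lemma sum_sum_powerset_erase_insert (f : Finset ι → M) :
    ∑ i, ∑ C ∈ (univ.erase i).powerset, f (insert i C) = ∑ S, #S • f S := by
  simp_rw [sum_powerset_erase_insert]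
  rw [sum_comm' (t' := univ) (s' := id) (by simp)]
  simp

end DoubleCounting

lemma w_nonneg (n k : ℕ) : 0 ≤ w n k := by
  unfold w; positivity

lemma w_zero {n : ℕ} (hn : 0 < n) : w n 0 = (n : ℝ)⁻¹ := by
  rw [w, ← Nat.mul_factorial_pred hn.ne', Nat.cast_mul]
  field_simp
  simp

lemma w_pred {n : ℕ} (hn : 0 < n) : w n (n - 1) = (n : ℝ)⁻¹ := by
  rw [w, show n - (n - 1) - 1 = 0 by omega, ← Nat.mul_factorial_pred hn.ne', Nat.cast_mul]
  field_simp
  simp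

lemma succ_mul_w {n k : ℕ} (hk : k + 1 < n) :
    ((k + 1 : ℕ) : ℝ) * w n k = ((n - (k + 1) : ℕ) : ℝ) * w n (k + 1) := by
  obtain ⟨m, rfl⟩ : ∃ m, n = k + m + 2 := ⟨n - k - 2, by omega⟩
  rw [w, w, show k + m + 2 - k - 1 = m + 1 by omega, show k + m + 2 - (k + 1) - 1 = m by omega,
    show k + m + 2 - (k + 1) = m + 1 by omega, Nat.factorial_succ m, Nat.factorial_succ k]
  push_cast
  ring

/-- The net coefficient of `a S`, `#S = k`, in `∑ i, clientShapley a i`. -/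
lemma card_mul_w_pred_sub {n k : ℕ} (hn : 0 < n) (hk : k ≤ n) :
    (k : ℝ) * w n (k - 1) - ((n - k : ℕ) : ℝ) * w n k
      = (if k = n then 1 else 0) - (if k = 0 then 1 else 0) := by
  rcases Nat.eq_zero_or_pos k with rfl | hk0
  · simp [hn.ne, w_zero hn, hn.ne']
  rcases hk.eq_or_lt with rfl | hkn
  · simp [hk0.ne', w_pred hn]
  obtain ⟨j, rfl⟩ : ∃ j, k = j + 1 := ⟨k - 1, by omega⟩
  rw [Nat.add_sub_cancel, succ_mul_w hkn]
  simp [hkn.ne]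

section ClientShapley

variable {ι : Type*} [Fintype ι] [DecidableEq ι]

theorem sum_clientShapley (a : Finset ι → ℝ) :
    ∑ i, clientShapley a i = a univ - a ∅ := by
  cases isEmpty_or_nonempty ι
  · simp [univ_eq_empty]
  have hn : 0 < Fintype.card ι := Fintype.card_pos
  have hsplit : ∀ i, clientShapley a i = ∑ C ∈ (univ.erase i).powerset,
      (w (Fintype.card ι) (#(insert i C) - 1) * a (insert i C) - w (Fintype.card ι) #C * a C) := by
    refine fun i => sum_congr rfl fun C hC => ?_
    rw [card_insert_of_notMem (by simp_all [subset_erase]), Nat.add_sub_cancel, mul_sub]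
  simp_rw [hsplit, sum_sub_distrib]
  rw [sum_sum_powerset_erase_insert (fun S => w _ (#S - 1) * a S),
    sum_sum_powerset_erase (fun S => w _ #S * a S), ← sum_sub_distrib]
  calc ∑ S : Finset ι, (#S • (w _ (#S - 1) * a S) - #Sᶜ • (w _ #S * a S))
      = ∑ S : Finset ι, ((if S = univ then 1 else 0) - (if S = ∅ then 1 else 0)) * a S := by
        refine sum_congr rfl fun S _ => ?_
        have hcoef := card_mul_w_pred_sub hn (card_le_univ S)
        simp only [card_eq_iff_eq_univ, card_eq_zero] at hcoef
        rw [← hcoef, card_compl, nsmul_eq_mul, nsmul_eq_mul]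
        ring
    _ = a univ - a ∅ := by simp [sub_mul, sum_sub_distrib]

theorem sum_erase_clientShapley (a : Finset ι → ℝ) (i : ι) :
    ∑ i' ∈ univ.erase i, clientShapley a i' = a univ - a ∅ - clientShapley a i := by
  rw [← sum_clientShapley, ← sum_erase_add _ _ (mem_univ i), add_sub_cancel_right]

theorem clientShapley_mono {a ah : Finset ι → ℝ} {i : ι}
    (hnoti : ∀ C, i ∉ C → ah C = a C) (hmem : ∀ C, i ∈ C → ah C ≤ a C) :
    clientShapley ah i ≤ clientShapley a i := by
  refine sum_le_sum fun C hC => mul_le_mul_of_nonneg_left ?_ (w_nonneg _ _)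
  have hiC : i ∉ C := by simp_all [subset_erase]
  rw [hnoti C hiC]
  exact sub_le_sub_right (hmem _ (mem_insert_self i C)) _

end ClientShapley

theorem truth_shapley_BIC_general {ι : Type*} [Fintype ι] [DecidableEq ι]
    (i : ι) (a ah : Finset ι → ℝ)
    (hfull : ah Finset.univ = a Finset.univ)
    (hnoti : ∀ C : Finset ι, i ∉ C → ah C = a C)
    (hopt : ∀ C : Finset ι, C ⊂ Finset.univ → i ∈ C → ah C ≤ a C) :
    clientShapley ah i ≤ clientShapley a i ∧
    ∑ i' ∈ Finset.univ.erase i, clientShapley a i'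
      ≤ ∑ i' ∈ Finset.univ.erase i, clientShapley ah i' := by
  have hown : clientShapley ah i ≤ clientShapley a i := by
    refine clientShapley_mono hnoti fun C hiC => ?_
    rcases eq_or_ne C univ with rfl | hC
    · exact hfull.le
    · exact hopt C (ssubset_univ_iff.mpr hC) hiC
  have hempty : ah ∅ = a ∅ := hnoti ∅ (notMem_empty i)
  refine ⟨hown, ?_⟩
  rw [sum_erase_clientShapley, sum_erase_clientShapley, hfull, hempty]
  linarith

/-- Theorem 4.5: Truth-Shapley is Bayesian incentive compatible.  Truthful
coalition utilities `a` dominate untruthful ones `ah` for client `i`'s own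
value, and are dominated for the other clients' total value. -/
theorem truth_shapley_BIC {ι : Type*} [Fintype ι] [DecidableEq ι] [Nonempty ι]
    (i : ι) (a ah : Finset ι → ℝ)
    (hfull : ah Finset.univ = a Finset.univ)
    (hnoti : ∀ C : Finset ι, i ∉ C → ah C = a C)
    (hopt : ∀ C : Finset ι, C ⊂ Finset.univ → i ∈ C → ah C ≤ a C) :
    clientShapley ah i ≤ clientShapley a i ∧
    ∑ i' ∈ Finset.univ.erase i, clientShapley a i'
      ≤ ∑ i' ∈ Finset.univ.erase i, clientShapley ah i' :=
  truth_shapley_BIC_general i a ah hfull hnoti hopt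
end

section
/- Let N be a finite nonempty set of clients with n = |N|, where each client i ∈ N owns a finite nonempty set D_i of data blocks, the sets D_i are pairwise disjoint, and D = ⋃_{i∈N} D_i. For every utility metric v : 2^D → ℝ with v(∅) = 0, the Truth-Shapley block values satisfy efficiency: Σ_{i∈N} Σ_{j∈D_i} φ^TSV_{i,j}(v) = v(D). -/
/-!
Truth-Shapley is a Shapley value taken twice: `φ^TSV_{i,j}` is the Shapley value of block `j`
in the game `v^{(i)}` on `D_i`, and `v^{(i)}(D_i)` is the Shapley value `φ^TSV_i` of client `i`
in the game `C ↦ v(D_C)`. Efficiency of the ordinary Shapley value, applied first inside each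
client and then across clients, gives `∑ᵢ ∑ⱼ φ^TSV_{i,j} = ∑ᵢ φ^TSV_i = v(D)`.
-/

open Finset

/-- The induced utility `v^{(i)}(S) = ∑_{C ⊆ N∖{i}} w_n(|C|)·(v(D_C ∪ S) − v(D_C))`,
where `D_C = ⋃_{i'∈C} D_{i'}`. -/
noncomputable def vInd {α : Type*} [DecidableEq α] {ι : Type*} [Fintype ι] [DecidableEq ι]
    (Dset : ι → Finset α) (v : Finset α → ℝ) (i : ι) (S : Finset α) : ℝ :=
  ∑ C ∈ (Finset.univ.erase i).powerset,
    w (Fintype.card ι) C.card * (v (C.biUnion Dset ∪ S) - v (C.biUnion Dset))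

/-- The client-level Truth-Shapley value
`φ^TSV_i(v) = ∑_{C ⊆ N∖{i}} w_n(|C|)·(v(D_{C∪{i}}) − v(D_C))`. -/
noncomputable def tsvClient {α : Type*} [DecidableEq α] {ι : Type*} [Fintype ι] [DecidableEq ι]
    (Dset : ι → Finset α) (v : Finset α → ℝ) (i : ι) : ℝ :=
  ∑ C ∈ (Finset.univ.erase i).powerset,
    w (Fintype.card ι) C.card * (v ((insert i C).biUnion Dset) - v (C.biUnion Dset))

/-- The block-level Truth-Shapley value
`φ^TSV_{i,j}(v) = ∑_{S ⊆ D_i∖{j}} w_{|D_i|}(|S|)·(v^{(i)}(S ∪ {j}) − v^{(i)}(S))`. -/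
noncomputable def tsvBlock {α : Type*} [DecidableEq α] {ι : Type*} [Fintype ι] [DecidableEq ι]
    (Dset : ι → Finset α) (v : Finset α → ℝ) (i : ι) (j : α) : ℝ :=
  ∑ S ∈ ((Dset i).erase j).powerset,
    w (Dset i).card S.card * (vInd Dset v i (insert j S) - vInd Dset v i S)

noncomputable def shapleyValue {β : Type*} [DecidableEq β] (P : Finset β) (u : Finset β → ℝ)
    (j : β) : ℝ :=
  ∑ S ∈ (P.erase j).powerset, w P.card S.card * (u (insert j S) - u S)

lemma succ_mul_w_eq {m k : ℕ} (hk : k + 1 < m) :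
    ((k + 1 : ℕ) : ℝ) * w m k = ((m - (k + 1) : ℕ) : ℝ) * w m (k + 1) := by
  obtain ⟨r, rfl⟩ : ∃ r, m = k + 1 + r + 1 := ⟨m - (k + 2), by omega⟩
  unfold w
  rw [show k + 1 + r + 1 - k - 1 = r + 1 by omega, show k + 1 + r + 1 - (k + 1) - 1 = r by omega,
    show k + 1 + r + 1 - (k + 1) = r + 1 by omega]
  push_cast [Nat.factorial_succ]
  ring

lemma mul_w_pred_self {m : ℕ} (hm : 0 < m) : (m : ℝ) * w m (m - 1) = 1 := by
  obtain ⟨r, rfl⟩ : ∃ r, m = r + 1 := ⟨m - 1, by omega⟩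
  unfold w
  rw [show r + 1 - 1 = r by omega, show r + 1 - r - 1 = 0 by omega]
  push_cast [Nat.factorial_succ, Nat.factorial_zero]
  field_simp

lemma shapleyValue_eq_sum_powerset {β : Type*} [DecidableEq β] {P : Finset β} {j : β}
    (hj : j ∈ P) (u : Finset β → ℝ) :
    shapleyValue P u j = ∑ T ∈ P.powerset,
      (if j ∈ T then w P.card (T.card - 1) else -w P.card T.card) * u T := by
  conv_rhs => rw [← insert_erase hj]
  rw [sum_powerset_insert (notMem_erase j P), shapleyValue, add_comm, ← sum_add_distrib]
  refine sum_congr rfl fun S hS => ?_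
  have hjS : j ∉ S := fun h => notMem_erase j P (mem_powerset.mp hS h)
  rw [if_pos (mem_insert_self j S), if_neg hjS, card_insert_of_notMem hjS, Nat.add_sub_cancel,
    insert_erase hj]
  ring

lemma sum_shapleyValue_eq_sum_powerset {β : Type*} [DecidableEq β] (P : Finset β)
    (u : Finset β → ℝ) :
    ∑ j ∈ P, shapleyValue P u j = ∑ T ∈ P.powerset,
      ((T.card : ℝ) * w P.card (T.card - 1) - ((P.card - T.card : ℕ) : ℝ) * w P.card T.card) *
        u T := by
  rw [sum_congr rfl fun j hj => shapleyValue_eq_sum_powerset hj u, sum_comm]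
  refine sum_congr rfl fun T hT => ?_
  have hTP := mem_powerset.mp hT
  rw [← sum_mul, sum_ite, sum_const, sum_const, filter_mem_eq_inter, inter_eq_right.mpr hTP,
    filter_not, filter_mem_eq_inter, inter_eq_right.mpr hTP, card_sdiff_of_subset hTP]
  simp only [nsmul_eq_mul]
  ring

theorem sum_shapleyValue {β : Type*} [DecidableEq β] (P : Finset β) {u : Finset β → ℝ}
    (hu : u ∅ = 0) : ∑ j ∈ P, shapleyValue P u j = u P := by
  rcases P.eq_empty_or_nonempty with rfl | hP
  · simp [hu]
  rw [sum_shapleyValue_eq_sum_powerset, sum_eq_single_of_mem P (mem_powerset_self P)]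
  · rw [Nat.sub_self, Nat.cast_zero, zero_mul, sub_zero, mul_w_pred_self hP.card_pos, one_mul]
  intro T hT hTP
  rcases T.eq_empty_or_nonempty with rfl | hT0
  · rw [hu, mul_zero]
  obtain ⟨k, hk⟩ : ∃ k, T.card = k + 1 := ⟨T.card - 1, by have := hT0.card_pos; omega⟩
  have hlt : k + 1 < P.card := hk ▸ card_lt_card (ssubset_of_subset_of_ne (mem_powerset.mp hT) hTP)
  rw [hk, Nat.add_sub_cancel, succ_mul_w_eq hlt, sub_self, zero_mul]

section TruthShapley

variable {α : Type*} [DecidableEq α] {ι : Type*} [Fintype ι] [DecidableEq ι]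
  (Dset : ι → Finset α) (v : Finset α → ℝ)

lemma tsvBlock_eq_shapleyValue (i : ι) :
    tsvBlock Dset v i = shapleyValue (Dset i) (vInd Dset v i) := rfl

lemma tsvClient_eq_shapleyValue :
    tsvClient Dset v = shapleyValue univ (fun C => v (C.biUnion Dset)) := rfl

lemma vInd_empty (i : ι) : vInd Dset v i ∅ = 0 := by
  simp [vInd]

lemma vInd_self (i : ι) : vInd Dset v i (Dset i) = tsvClient Dset v i := by
  refine sum_congr rfl fun C _ => ?_
  rw [biUnion_insert, union_comm]

end TruthShapley

theorem truth_shapley_efficiency_general {α : Type*} [DecidableEq α]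
    {ι : Type*} [Fintype ι] [DecidableEq ι]
    (Dset : ι → Finset α)
    (D : Finset α) (hD : D = Finset.univ.biUnion Dset)
    (v : Finset α → ℝ) (hv : v ∅ = 0) :
    ∑ i : ι, ∑ j ∈ Dset i, tsvBlock Dset v i j = v D := by
  calc ∑ i : ι, ∑ j ∈ Dset i, tsvBlock Dset v i j
      = ∑ i : ι, vInd Dset v i (Dset i) := by
        simp only [tsvBlock_eq_shapleyValue, sum_shapleyValue _ (vInd_empty Dset v _)]
    _ = ∑ i : ι, tsvClient Dset v i := by simp only [vInd_self]
    _ = v D := by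
        rw [tsvClient_eq_shapleyValue, sum_shapleyValue univ (by simpa using hv), hD]

/-- Efficiency (EFF) of Truth-Shapley: the block-level values sum to the
utility of the full block set `D`. Part of Theorem 4.6. -/
theorem truth_shapley_efficiency {α : Type*} [DecidableEq α]
    {ι : Type*} [Fintype ι] [DecidableEq ι] [Nonempty ι]
    (Dset : ι → Finset α) (hne : ∀ i, (Dset i).Nonempty)
    (hdisj : ∀ i j : ι, i ≠ j → Disjoint (Dset i) (Dset j))
    (D : Finset α) (hD : D = Finset.univ.biUnion Dset)
    (v : Finset α → ℝ) (hv : v ∅ = 0) :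
    ∑ i : ι, ∑ j ∈ Dset i, tsvBlock Dset v i j = v D :=
  truth_shapley_efficiency_general Dset D hD v hv
end
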